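/- Let K be a field of characteristic 0 and let V₀, V₁ be K-vector spaces. Let D : V₀ × V₁ → V₀ × V₁ be the K-linear endomorphism D(x,y) = (x, 2y). Suppose φ is a K-linear automorphism of V₀ × V₁ such that φ(x,0) = (x,0) for all x ∈ V₀, and such that φ ∘ φ ∘ D = D ∘ φ. Then φ is the identity of V₀ × V₁. -/
import Mathlib


/-!
**Statement 7** (the linear-algebra core of the proof of Theorem 14Ba of Wildeshaus,
"On the Eisenstein symbol":  translations by sections act trivially on the
`(−1)`-eigenpart of the cohomology of an elliptic curve).

Let `K` be a field of characteristic `0`, `V₀` and `V₁` two `K`-vector spaces, and let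
`D : V₀ × V₁ → V₀ × V₁` be the linear endomorphism `D (x, y) = (x, 2 • y)`.  If `φ` is a
linear automorphism of `V₀ × V₁` fixing `V₀ × {0}` pointwise and satisfying
`φ ∘ φ ∘ D = D ∘ φ`, then `φ` is the identity.
-/

theorem statement7 (K : Type*) [Field K] [CharZero K]
    (V₀ V₁ : Type*) [AddCommGroup V₀] [Module K V₀] [AddCommGroup V₁] [Module K V₁]
    (D : (V₀ × V₁) →ₗ[K] (V₀ × V₁)) (hD : ∀ x : V₀, ∀ y : V₁, D (x, y) = (x, (2 : K) • y))
    (φ : (V₀ × V₁) ≃ₗ[K] (V₀ × V₁))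
    (hfix : ∀ x : V₀, φ (x, 0) = (x, 0))
    (hcomm : φ.toLinearMap ∘ₗ φ.toLinearMap ∘ₗ D = D ∘ₗ φ.toLinearMap) :
    φ = LinearEquiv.refl K (V₀ × V₁) := by
  have h2 : (2 : K) ≠ 0 := two_ne_zero
  -- abbreviations for the components of φ on the second factor
  set a : V₁ → V₀ := fun y => (φ (0, y)).1 with ha
  set b : V₁ → V₁ := fun y => (φ (0, y)).2 with hb
  -- φ is triangular: φ (x, y) = (x + a y, b y)
  have hadd : ∀ (x : V₀) (y : V₁), φ (x, y) = (x + a y, b y) := by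
    intro x y
    have : ((x, y) : V₀ × V₁) = (x, 0) + (0, y) := by simp
    rw [this, map_add, hfix, ha, hb]
    exact Prod.ext (by simp) (by simp)
  -- key consequence of hcomm at (0, y), fully expanded
  have key : ∀ y : V₁, (2 : K) • ((a y + a (b y), b (b y)) : V₀ × V₁)
      = (a y, (2 : K) • b y) := by
    intro y
    have h := LinearMap.congr_fun hcomm ((0 : V₀), y)
    simp only [LinearMap.comp_apply, LinearEquiv.coe_coe] at h
    rw [hD] at h
    have e1 : φ ((0 : V₀), (2 : K) • y) = (2 : K) • φ (0, y) := by
      rw [← map_smul]; congr 1; simp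
    rw [e1, map_smul, hadd, hadd, hD] at h
    simpa using h
  -- consequences on components
  have keyb : ∀ y : V₁, b (b y) = b y := by
    intro y
    have h := congrArg Prod.snd (key y)
    simp only [Prod.smul_snd, Prod.snd] at h
    exact smul_right_injective V₁ h2 h
  have keya : ∀ y : V₁, (2 : K) • (a y + a (b y)) = a y :=
    fun y => congrArg Prod.fst (key y)
  -- b is surjective
  have hsurj : ∀ c : V₁, ∃ y : V₁, b y = c := by
    intro c
    obtain ⟨⟨x, y⟩, hxy⟩ : ∃ p, φ p = ((0 : V₀), c) := ⟨φ.symm (0, c), φ.apply_symm_apply _⟩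
    rw [hadd] at hxy
    exact ⟨y, congrArg Prod.snd hxy⟩
  -- hence b = id
  have hbid : ∀ c : V₁, b c = c := by
    intro c
    obtain ⟨y, rfl⟩ := hsurj c
    exact keyb y
  -- hence a = 0
  have haz : ∀ y : V₁, a y = 0 := by
    intro y
    have h := keya y
    rw [hbid] at h
    have h3 : (3 : K) • a y = 0 := by
      linear_combination (norm := module) h
    have h3' : (3 : K) ≠ 0 := by norm_num
    exact (smul_eq_zero.mp h3).resolve_left h3' 
  -- conclude
  apply LinearEquiv.toLinearMap_injective
  apply LinearMap.ext
  rintro ⟨x, y⟩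
  simp only [LinearEquiv.coe_coe, LinearEquiv.refl_toLinearMap, LinearMap.id_coe, id_eq]
  rw [hadd, haz, hbid, add_zero]
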